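/- arXiv:2605.23671 — 3 statements merged into one kernel-verified Lean document; each statement's English description precedes it below -/
import Mathlib

section
/- Let (p*, p⁺*, p⁻*, x*) be an optimal solution of the L-ESM subproblem and set X* = Σ_{m∈U} x_m*. If for some m ∈ U one has p_m⁺* = 0, p_m⁻* = 0, and 0 < p_m* < p̄_m, then p_m* = x_m* + D_m, the Mode-1 stationarity relation c_m(x_m* + D_m) + b_m − w⁰ + a·X* + a·x_m* = 0 holds, and moreover w⁻ ≤ c_m·p_m* + b_m ≤ w⁺, so that α_m ≤ x_m* ≤ β_m. -/
open Finset

variable {U : Type*} [Fintype U]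

/-- A point `(p, p⁺, p⁻, x)` is feasible for the L-ESM subproblem:
power balance, generator bounds, and nonnegativity of grid trades. -/
def Feasible (D pbar : U → ℝ) (p pp pm x : U → ℝ) : Prop :=
  ∀ m : U, D m + x m + pm m = p m + pp m ∧
    0 ≤ p m ∧ p m ≤ pbar m ∧ 0 ≤ pp m ∧ 0 ≤ pm m

/-- Objective of the L-ESM subproblem at base price `w0`. -/
noncomputable def Objective (c b : U → ℝ) (wplus wminus a w0 : ℝ)
    (p pp pm x : U → ℝ) : ℝ :=
  (∑ m : U, (c m / 2 * (p m) ^ 2 + b m * p m + wplus * pp m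
      - wminus * pm m - w0 * x m))
    + a / 2 * ∑ m : U, (x m) ^ 2 + a / 2 * (∑ m : U, x m) ^ 2

/-- `(p, p⁺, p⁻, x)` is an optimal solution of the L-ESM subproblem. -/
noncomputable def IsOptimal (c b D pbar : U → ℝ) (wplus wminus a w0 : ℝ)
    (p pp pm x : U → ℝ) : Prop :=
  Feasible D pbar p pp pm x ∧
    ∀ q qp qm y : U → ℝ, Feasible D pbar q qp qm y →
      Objective c b wplus wminus a w0 p pp pm x ≤
        Objective c b wplus wminus a w0 q qp qm y

/-!
At an optimum, perturb only the coordinates of prosumer `m` along a direction that keeps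
the balance `D + x + p⁻ = p + p⁺`. Since `p_m` lies strictly inside `[0, p̄_m]` and the
trades only grow, every such perturbation is feasible for small `t > 0`, and the objective
changes by `t · (directional derivative) + t² · (const)`, so each directional derivative is
nonnegative. Moving `p_m` and `x_m` together up and down gives the stationarity equation;
selling extra output (`p_m, p⁻_m` up) and buying instead of producing (`p⁺_m` up, `p_m`
down) give `w⁻ ≤ c_m p_m + b_m ≤ w⁺`.
-/

theorem nonneg_of_forall_mul_add_mul_sq_nonneg {K A ε : ℝ} (hε : 0 < ε)
    (h : ∀ t, 0 < t → t ≤ ε → 0 ≤ K * t + A * t ^ 2) : 0 ≤ K := by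
  have hlim : Filter.Tendsto (fun t : ℝ => K + A * t) (nhdsWithin 0 (Set.Ioi 0)) (nhds K) := by
    have : Continuous (fun t : ℝ => K + A * t) := by fun_prop
    simpa using (this.tendsto 0).mono_left nhdsWithin_le_nhds
  refine ge_of_tendsto hlim ?_
  filter_upwards [Ioc_mem_nhdsGT hε] with t ⟨ht, htε⟩
  have := h t ht htε
  nlinarith

theorem sum_sub_sum_eq_sub_of_forall_ne {ι M : Type*} [Fintype ι] [AddCommGroup M]
    {f g : ι → M} (m : ι) (h : ∀ j, j ≠ m → f j = g j) :
    ∑ j, f j - ∑ j, g j = f m - g m := by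
  rw [← Finset.sum_sub_distrib]
  exact Fintype.sum_eq_single m fun j hj => by rw [h j hj, sub_self]

theorem Feasible.update {ι : Type*} [DecidableEq ι] {D pbar p pp pm x : ι → ℝ}
    (h : Feasible D pbar p pp pm x) (m : ι) {P PP PM X : ℝ}
    (hbal : D m + X + PM = P + PP) (hP : 0 ≤ P) (hPbar : P ≤ pbar m)
    (hPP : 0 ≤ PP) (hPM : 0 ≤ PM) :
    Feasible D pbar (Function.update p m P) (Function.update pp m PP)
      (Function.update pm m PM) (Function.update x m X) := by
  intro j
  rcases eq_or_ne j m with rfl | hj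
  · simpa using ⟨hbal, hP, hPbar, hPP, hPM⟩
  · simpa [Function.update_of_ne hj] using h j

theorem objective_update_sub [DecidableEq U] (c b : U → ℝ) (wplus wminus a w0 : ℝ)
    (p pp pm x : U → ℝ) (m : U) (P PP PM X : ℝ) :
    Objective c b wplus wminus a w0 (Function.update p m P) (Function.update pp m PP)
        (Function.update pm m PM) (Function.update x m X)
      - Objective c b wplus wminus a w0 p pp pm x =
    c m / 2 * (P ^ 2 - p m ^ 2) + b m * (P - p m) + wplus * (PP - pp m)
      - wminus * (PM - pm m) - w0 * (X - x m)
      + a / 2 * (X ^ 2 - x m ^ 2)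
      + a / 2 * ((∑ j, x j + (X - x m)) ^ 2 - (∑ j, x j) ^ 2) := by
  have hcost := sum_sub_sum_eq_sub_of_forall_ne
    (f := fun j => c j / 2 * Function.update p m P j ^ 2 + b j * Function.update p m P j
      + wplus * Function.update pp m PP j - wminus * Function.update pm m PM j
      - w0 * Function.update x m X j)
    (g := fun j => c j / 2 * p j ^ 2 + b j * p j + wplus * pp j - wminus * pm j - w0 * x j)
    m fun j hj => by simp only [Function.update_of_ne hj]
  have hsq := sum_sub_sum_eq_sub_of_forall_ne (f := fun j => Function.update x m X j ^ 2)
    (g := fun j => x j ^ 2) m fun j hj => by simp only [Function.update_of_ne hj]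
  have hsum := sum_sub_sum_eq_sub_of_forall_ne (f := Function.update x m X) (g := x)
    m fun j hj => Function.update_of_ne hj X x
  simp only [Function.update_self] at hcost hsq hsum
  unfold Objective
  linear_combination hcost + a / 2 * hsq
    + a / 2 * (∑ j, Function.update x m X j + ∑ j, x j + (X - x m)) * hsum

theorem IsOptimal.directional_nonneg {c b D pbar : U → ℝ} {wplus wminus a w0 : ℝ}
    {p pp pm x : U → ℝ} (hopt : IsOptimal c b D pbar wplus wminus a w0 p pp pm x)
    {m : U} (hlb : 0 < p m) (hub : p m < pbar m)
    {dp dpp dpm dx : ℝ} (hdir : dx + dpm = dp + dpp) (hdp : |dp| ≤ 1)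
    (hdpp : 0 ≤ dpp) (hdpm : 0 ≤ dpm) :
    0 ≤ (c m * p m + b m) * dp + wplus * dpp - wminus * dpm
      + (a * x m + a * ∑ j, x j - w0) * dx := by
  classical
  obtain ⟨hfeas, hmin⟩ := hopt
  obtain ⟨hbal, -, -, hpp, hpm⟩ := hfeas m
  refine nonneg_of_forall_mul_add_mul_sq_nonneg (A := c m / 2 * dp ^ 2 + a * dx ^ 2)
    (lt_min hlb (sub_pos.mpr hub)) fun t ht htε => ?_
  have hstep : |t * dp| ≤ t := by
    simpa [abs_mul, abs_of_pos ht] using mul_le_mul_of_nonneg_left hdp ht.le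
  have hfeas' := hfeas.update m (P := p m + t * dp) (PP := pp m + t * dpp)
    (PM := pm m + t * dpm) (X := x m + t * dx)
    (by linear_combination hbal + t * hdir)
    (by linarith [neg_abs_le (t * dp), min_le_left (p m) (pbar m - p m)])
    (by linarith [le_abs_self (t * dp), min_le_right (p m) (pbar m - p m)])
    (by positivity) (by positivity)
  have hle := sub_nonneg.mpr (hmin _ _ _ _ hfeas')
  rw [objective_update_sub] at hle
  linear_combination hle

theorem lesm_mode1_characterization_general
    (c b D pbar : U → ℝ) (wplus wminus a w0 : ℝ)
    (hc : ∀ m, 0 < c m)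
    (p pp pm x : U → ℝ)
    (hopt : IsOptimal c b D pbar wplus wminus a w0 p pp pm x)
    (m : U) (hppm : pp m = 0) (hpmm : pm m = 0)
    (hlb : 0 < p m) (hub : p m < pbar m) :
    p m = x m + D m ∧
    c m * (x m + D m) + b m - w0 + a * (∑ j : U, x j) + a * x m = 0 ∧
    (wminus ≤ c m * p m + b m ∧ c m * p m + b m ≤ wplus) ∧
    ((wminus - b m) / c m - D m ≤ x m ∧ x m ≤ (wplus - b m) / c m - D m) := by
  have hbal := (hopt.1 m).1
  have hpx : p m = x m + D m := by linarith
  have hup := hopt.directional_nonneg hlb hub (dp := 1) (dpp := 0) (dpm := 0) (dx := 1)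
    (by ring) (by norm_num) le_rfl le_rfl
  have hdown := hopt.directional_nonneg hlb hub (dp := -1) (dpp := 0) (dpm := 0) (dx := -1)
    (by ring) (by norm_num) le_rfl le_rfl
  have hsell := hopt.directional_nonneg hlb hub (dp := 1) (dpp := 0) (dpm := 1) (dx := 0)
    (by ring) (by norm_num) le_rfl zero_le_one
  have hbuy := hopt.directional_nonneg hlb hub (dp := -1) (dpp := 1) (dpm := 0) (dx := 0)
    (by ring) (by norm_num) zero_le_one le_rfl
  have hwminus : wminus ≤ c m * p m + b m := by linarith
  have hwplus : c m * p m + b m ≤ wplus := by linarith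
  refine ⟨hpx, by rw [← hpx]; linarith, ⟨hwminus, hwplus⟩, ?_, ?_⟩
  · rw [sub_le_iff_le_add, div_le_iff₀ (hc m), ← hpx]
    linarith
  · rw [le_sub_iff_add_le, le_div_iff₀ (hc m), ← hpx]
    linarith

/-- if `p⁺_m = 0`, `p⁻_m = 0` and `0 < p_m < p̄_m` at an optimum,
then prosumer `m` is in Mode 1: `p_m = x_m + D_m`, the Mode-1 stationarity
relation holds, `w⁻ ≤ c_m p_m + b_m ≤ w⁺`, and `α_m ≤ x_m ≤ β_m`. -/
theorem lesm_mode1_characterization [Nonempty U]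
    (c b D pbar : U → ℝ) (wplus wminus a w0 : ℝ)
    (hc : ∀ m, 0 < c m) (hpbar : ∀ m, 0 ≤ pbar m)
    (hb : ∀ m, 0 < b m) (hbw : ∀ m, b m < wminus)
    (hw : wminus < wplus) (ha : 0 < a)
    (p pp pm x : U → ℝ)
    (hopt : IsOptimal c b D pbar wplus wminus a w0 p pp pm x)
    (m : U) (hppm : pp m = 0) (hpmm : pm m = 0)
    (hlb : 0 < p m) (hub : p m < pbar m) :
    p m = x m + D m ∧
    c m * (x m + D m) + b m - w0 + a * (∑ j : U, x j) + a * x m = 0 ∧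
    (wminus ≤ c m * p m + b m ∧ c m * p m + b m ≤ wplus) ∧
    ((wminus - b m) / c m - D m ≤ x m ∧ x m ≤ (wplus - b m) / c m - D m) :=
  lesm_mode1_characterization_general c b D pbar wplus wminus a w0 hc p pp pm x hopt m hppm hpmm hlb
    hub
end

section
/- If w₁ < w₂ and X(w₁) = X(w₂), then every prosumer is in Mode 4 throughout the interval: for every w ∈ [w₁, w₂] and every m ∈ U, x_m*(w) = p̄_m − D_m and p_m*(w) = p̄_m. -/
open Finset

variable {U : Type*} [Fintype U]

lemma aux_eps (A B ε₀ : ℝ) (hε₀ : 0 < ε₀)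
    (h : ∀ ε : ℝ, 0 < ε → ε ≤ ε₀ → 0 ≤ A * ε + B * ε ^ 2) : 0 ≤ A := by
  by_contra hA
  push_neg at hA
  have hB1 : (0:ℝ) < |B| + 1 := by positivity
  set ε : ℝ := min ε₀ ((-A) / (2 * (|B| + 1))) with hε
  have hεpos : 0 < ε := lt_min hε₀ (div_pos (by linarith) (by positivity))
  have hεle : ε ≤ ε₀ := min_le_left _ _
  have h2 : ε ≤ (-A) / (2 * (|B| + 1)) := min_le_right _ _
  have h2' : ε * (2 * (|B| + 1)) ≤ -A := by
    rw [← le_div_iff₀ (by positivity)]; exact h2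
  have h3 := h ε hεpos hεle
  have hBabs : B ≤ |B| + 1 := le_trans (le_abs_self B) (by linarith)
  nlinarith [sq_nonneg ε, mul_pos hεpos hεpos]

lemma sum_shift (f g : U → ℝ) (m : U) [DecidableEq U]
    (h : ∀ i, i ≠ m → g i = f i) :
    ∑ i, g i = ∑ i, f i + (g m - f m) := by
  have hc : ∀ i ∈ (univ : Finset U), g i = f i + (if i = m then g m - f m else 0) := by
    intro i _
    by_cases hi : i = m
    · subst hi; simp
    · simp [hi, h i hi]
  rw [Finset.sum_congr rfl hc, Finset.sum_add_distrib, Finset.sum_ite_eq' univ m]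
  simp

lemma obj_split (c b : U → ℝ) (wplus wminus a w0 : ℝ) (p pp pm x : U → ℝ) :
    Objective c b wplus wminus a w0 p pp pm x
      = (∑ i : U, (c i / 2 * (p i) ^ 2 + b i * p i + wplus * pp i - wminus * pm i))
        - w0 * (∑ i : U, x i) + a / 2 * (∑ i : U, (x i) ^ 2)
        + a / 2 * (∑ i : U, x i) ^ 2 := by
  unfold Objective
  have : (∑ m : U, (c m / 2 * (p m) ^ 2 + b m * p m + wplus * pp m
      - wminus * pm m - w0 * x m))
      = (∑ i : U, (c i / 2 * (p i) ^ 2 + b i * p i + wplus * pp i - wminus * pm i))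
        - ∑ i : U, w0 * x i := by
    rw [← Finset.sum_sub_distrib]
  rw [this, ← Finset.mul_sum]

lemma obj_pert_eq [DecidableEq U] (c b : U → ℝ) (wplus wminus a w0 : ℝ)
    (p pp pm x : U → ℝ) (m : U) (dp dpp dpm dx ε : ℝ) :
    Objective c b wplus wminus a w0
      (fun i => if i = m then p i + ε * dp else p i)
      (fun i => if i = m then pp i + ε * dpp else pp i)
      (fun i => if i = m then pm i + ε * dpm else pm i)
      (fun i => if i = m then x i + ε * dx else x i)
    = Objective c b wplus wminus a w0 p pp pm x
      + ((c m * p m + b m) * dp + wplus * dpp - wminus * dpm - w0 * dx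
          + a * x m * dx + a * (∑ i : U, x i) * dx) * ε
      + (c m / 2 * dp ^ 2 + a * dx ^ 2) * ε ^ 2 := by
  unfold Objective
  have e1 := sum_shift (f := fun i => c i / 2 * (p i) ^ 2 + b i * p i + wplus * pp i
      - wminus * pm i - w0 * x i)
    (g := fun i => c i / 2 * (if i = m then p i + ε * dp else p i) ^ 2
      + b i * (if i = m then p i + ε * dp else p i)
      + wplus * (if i = m then pp i + ε * dpp else pp i)
      - wminus * (if i = m then pm i + ε * dpm else pm i)
      - w0 * (if i = m then x i + ε * dx else x i)) m (by intro i hi; simp [hi])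
  have e2 := sum_shift (f := fun i => (x i) ^ 2)
    (g := fun i => (if i = m then x i + ε * dx else x i) ^ 2) m (by intro i hi; simp [hi])
  have e3 := sum_shift (f := fun i => x i)
    (g := fun i => (if i = m then x i + ε * dx else x i)) m (by intro i hi; simp [hi])
  rw [e1, e2, e3]
  simp only [if_pos rfl, if_true]
  ring

lemma pert_ineq [DecidableEq U] (c b D pbar : U → ℝ) (wplus wminus a w0 : ℝ)
    (p pp pm x : U → ℝ)
    (hopt : IsOptimal c b D pbar wplus wminus a w0 p pp pm x) (m : U)
    (dp dpp dpm dx ε₀ : ℝ) (hε₀ : 0 < ε₀)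
    (hfeas : ∀ ε : ℝ, 0 < ε → ε ≤ ε₀ → Feasible D pbar
      (fun i => if i = m then p i + ε * dp else p i)
      (fun i => if i = m then pp i + ε * dpp else pp i)
      (fun i => if i = m then pm i + ε * dpm else pm i)
      (fun i => if i = m then x i + ε * dx else x i)) :
    0 ≤ (c m * p m + b m) * dp + wplus * dpp - wminus * dpm - w0 * dx
          + a * x m * dx + a * (∑ i : U, x i) * dx := by
  apply aux_eps _ (c m / 2 * dp ^ 2 + a * dx ^ 2) ε₀ hε₀
  intro ε h1 h2
  have h3 := hopt.2 _ _ _ _ (hfeas ε h1 h2)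
  rw [obj_pert_eq] at h3
  linarith

lemma sum_split3 (f g h : U → ℝ) (hfg : ∀ i ∈ (univ : Finset U), f i = g i + h i) :
    ∑ i, f i = ∑ i, g i + ∑ i, h i := by
  rw [Finset.sum_congr rfl hfg, Finset.sum_add_distrib]

lemma obj_mid (c b : U → ℝ) (wplus wminus a w0 : ℝ)
    (p pp pm x q qp qm y : U → ℝ) :
    Objective c b wplus wminus a w0
      (fun i => (p i + q i) / 2) (fun i => (pp i + qp i) / 2)
      (fun i => (pm i + qm i) / 2) (fun i => (x i + y i) / 2)
    = (Objective c b wplus wminus a w0 p pp pm x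
        + Objective c b wplus wminus a w0 q qp qm y) / 2
      - ∑ i : U, c i / 8 * (p i - q i) ^ 2
      - a / 8 * (∑ i : U, (x i - y i) ^ 2)
      - a / 8 * (∑ i : U, x i - ∑ i : U, y i) ^ 2 := by
  unfold Objective
  have e1 : ∑ i : U, (c i / 2 * ((p i + q i) / 2) ^ 2 + b i * ((p i + q i) / 2)
        + wplus * ((pp i + qp i) / 2) - wminus * ((pm i + qm i) / 2)
        - w0 * ((x i + y i) / 2))
      = ∑ i : U, ((c i / 2 * (p i) ^ 2 + b i * p i + wplus * pp i - wminus * pm i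
            - w0 * x i) / 2 + (c i / 2 * (q i) ^ 2 + b i * q i + wplus * qp i
            - wminus * qm i - w0 * y i) / 2)
        + ∑ i : U, (- (c i / 8 * (p i - q i) ^ 2)) := by
    apply sum_split3; intro i _; ring
  have e2 : ∑ i : U, ((x i + y i) / 2) ^ 2
      = ∑ i : U, (((x i) ^ 2 + (y i) ^ 2) / 2)
        + ∑ i : U, (- ((x i - y i) ^ 2 / 4)) := by
    apply sum_split3; intro i _; ring
  have e3 : ∑ i : U, (x i + y i) / 2 = (∑ i : U, x i + ∑ i : U, y i) / 2 := by
    rw [← Finset.sum_div, Finset.sum_add_distrib]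
  have e4 : ∑ i : U, ((c i / 2 * (p i) ^ 2 + b i * p i + wplus * pp i - wminus * pm i
            - w0 * x i) / 2 + (c i / 2 * (q i) ^ 2 + b i * q i + wplus * qp i
            - wminus * qm i - w0 * y i) / 2)
      = (∑ i : U, (c i / 2 * (p i) ^ 2 + b i * p i + wplus * pp i - wminus * pm i
            - w0 * x i)) / 2 + (∑ i : U, (c i / 2 * (q i) ^ 2 + b i * q i + wplus * qp i
            - wminus * qm i - w0 * y i)) / 2 := by
    rw [Finset.sum_add_distrib, Finset.sum_div, Finset.sum_div]
  have e5 : ∑ i : U, (((x i) ^ 2 + (y i) ^ 2) / 2)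
      = ((∑ i : U, (x i) ^ 2) + ∑ i : U, (y i) ^ 2) / 2 := by
    rw [← Finset.sum_div, Finset.sum_add_distrib]
  have e6 : ∑ i : U, (- (c i / 8 * (p i - q i) ^ 2)) = - ∑ i : U, c i / 8 * (p i - q i) ^ 2 :=
    Finset.sum_neg_distrib _
  have e7 : ∑ i : U, (- ((x i - y i) ^ 2 / 4)) = - ((∑ i : U, (x i - y i) ^ 2) / 4) := by
    rw [Finset.sum_neg_distrib, ← Finset.sum_div]
  rw [e1, e2, e3, e4, e5, e6, e7]
  ring

lemma strict_eq (c b D pbar : U → ℝ) (wplus wminus a w0 : ℝ)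
    (hc : ∀ m, 0 < c m) (ha : 0 < a)
    (p pp pm x q qp qm y : U → ℝ)
    (hoptp : IsOptimal c b D pbar wplus wminus a w0 p pp pm x)
    (hfq : Feasible D pbar q qp qm y)
    (hle : Objective c b wplus wminus a w0 q qp qm y
      ≤ Objective c b wplus wminus a w0 p pp pm x) :
    (∀ i, x i = y i) ∧ ∀ i, p i = q i := by
  have heq : Objective c b wplus wminus a w0 q qp qm y
      = Objective c b wplus wminus a w0 p pp pm x :=
    le_antisymm hle (hoptp.2 _ _ _ _ hfq)
  have hmid : Feasible D pbar (fun i => (p i + q i) / 2) (fun i => (pp i + qp i) / 2)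
      (fun i => (pm i + qm i) / 2) (fun i => (x i + y i) / 2) := by
    intro i
    obtain ⟨h1, h2, h3, h4, h5⟩ := hoptp.1 i
    obtain ⟨g1, g2, g3, g4, g5⟩ := hfq i
    refine ⟨by linarith, by linarith, by linarith, by linarith, by linarith⟩
  have hopm := hoptp.2 _ _ _ _ hmid
  rw [obj_mid, heq] at hopm
  have hQp : (0:ℝ) ≤ ∑ i : U, c i / 8 * (p i - q i) ^ 2 :=
    Finset.sum_nonneg fun i _ => mul_nonneg (by linarith [hc i]) (sq_nonneg _)
  have hQx : (0:ℝ) ≤ ∑ i : U, (x i - y i) ^ 2 :=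
    Finset.sum_nonneg fun i _ => sq_nonneg _
  have hQs : (0:ℝ) ≤ (∑ i : U, x i - ∑ i : U, y i) ^ 2 := sq_nonneg _
  have ha8 : (0:ℝ) < a / 8 := by linarith
  have hQp0 : ∑ i : U, c i / 8 * (p i - q i) ^ 2 = 0 := by nlinarith
  have hQx0 : ∑ i : U, (x i - y i) ^ 2 = 0 := by nlinarith
  constructor
  · intro i
    have := (Finset.sum_eq_zero_iff_of_nonneg (fun i _ => sq_nonneg (x i - y i))).1
      hQx0 i (mem_univ i)
    have := pow_eq_zero_iff (n := 2) (by norm_num) |>.1 this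
    linarith
  · intro i
    have := (Finset.sum_eq_zero_iff_of_nonneg
      (fun i _ => mul_nonneg (by linarith [hc i]) (sq_nonneg _) :
        ∀ i ∈ (univ : Finset U), (0:ℝ) ≤ c i / 8 * (p i - q i) ^ 2)).1
      hQp0 i (mem_univ i)
    have hci : c i / 8 ≠ 0 := by have := hc i; positivity
    have hsq : (p i - q i) ^ 2 = 0 := by
      rcases mul_eq_zero.1 this with h | h
      · exact absurd h hci
      · exact h
    have := pow_eq_zero_iff (n := 2) (by norm_num) |>.1 hsq
    linarith

/-- if `w₁ < w₂` and `X(w₁) = X(w₂)`, then every prosumer is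
locked in Mode 4 throughout `[w₁, w₂]`: `x_m*(w) = p̄_m − D_m` and
`p_m*(w) = p̄_m`. -/
theorem lesm_constant_aggregate_mode4 [Nonempty U]
    (c b D pbar : U → ℝ) (wplus wminus a : ℝ)
    (hc : ∀ m, 0 < c m) (hpbar : ∀ m, 0 ≤ pbar m)
    (hb : ∀ m, 0 < b m) (hbw : ∀ m, b m < wminus)
    (hw : wminus < wplus) (ha : 0 < a)
    (pstar ppstar pmstar xstar : ℝ → U → ℝ)
    (hopt : ∀ w0 : ℝ, IsOptimal c b D pbar wplus wminus a w0
      (pstar w0) (ppstar w0) (pmstar w0) (xstar w0))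
    (w1 w2 : ℝ) (hlt : w1 < w2)
    (hXeq : (∑ m : U, xstar w1 m) = (∑ m : U, xstar w2 m)) :
    ∀ w ∈ Set.Icc w1 w2, ∀ m : U,
      xstar w m = pbar m - D m ∧ pstar w m = pbar m := by
  classical
  -- Step A: monotonicity of the aggregate
  have mono : ∀ u v : ℝ, u ≤ v → (∑ i : U, xstar u i) ≤ ∑ i : U, xstar v i := by
    intro u v huv
    rcases eq_or_lt_of_le huv with h | h
    · rw [h]
    · by_contra hcon
      push_neg at hcon
      have h1 := (hopt u).2 _ _ _ _ (hopt v).1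
      have h2 := (hopt v).2 _ _ _ _ (hopt u).1
      rw [obj_split, obj_split] at h1
      rw [obj_split, obj_split] at h2
      nlinarith [mul_pos (sub_pos.2 h) (sub_pos.2 hcon)]
  have hXconst : ∀ u ∈ Set.Icc w1 w2, (∑ i : U, xstar u i) = ∑ i : U, xstar w1 i := by
    intro u hu
    have h1 := mono w1 u hu.1
    have h2 := mono u w2 hu.2
    linarith
  -- Step B/C: the p- and x-parts agree across the interval
  have same : ∀ u ∈ Set.Icc w1 w2,
      (∀ i, xstar w1 i = xstar u i) ∧ (∀ i, pstar w1 i = pstar u i) := by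
    intro u hu
    rcases eq_or_lt_of_le hu.1 with h | h
    · subst h; exact ⟨fun i => rfl, fun i => rfl⟩
    · have hS := hXconst u hu
      have h2 := (hopt u).2 _ _ _ _ (hopt w1).1
      have hle : Objective c b wplus wminus a w1 (pstar u) (ppstar u) (pmstar u) (xstar u)
          ≤ Objective c b wplus wminus a w1
            (pstar w1) (ppstar w1) (pmstar w1) (xstar w1) := by
        rw [obj_split, obj_split] at h2 ⊢
        rw [hS] at h2 ⊢
        linarith
      exact strict_eq c b D pbar wplus wminus a w1 hc ha _ _ _ _ _ _ _ _
        (hopt w1) (hopt u).1 hle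
  have hw2m : w2 ∈ Set.Icc w1 w2 := ⟨le_of_lt hlt, le_refl w2⟩
  have same2 := same w2 hw2m
  intro w hwm m
  have samew := same w hwm
  -- abbreviations
  have hx2 : xstar w2 m = xstar w1 m := (same2.1 m).symm
  have hp2 : pstar w2 m = pstar w1 m := (same2.2 m).symm
  have hS2 : (∑ i : U, xstar w2 i) = ∑ i : U, xstar w1 i := hXeq.symm
  -- inequality (II) at w1 : θ ≤ w1 - wminus
  have A2 : 0 ≤ (c m * pstar w1 m + b m) * 0 + wplus * 0 - wminus * 1 - w1 * (-1)
      + a * xstar w1 m * (-1) + a * (∑ i : U, xstar w1 i) * (-1) := by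
    apply pert_ineq c b D pbar wplus wminus a w1 _ _ _ _ (hopt w1) m 0 0 1 (-1) 1 one_pos
    intro ε hε1 hε2 i
    obtain ⟨g1, g2, g3, g4, g5⟩ := (hopt w1).1 i
    by_cases hi : i = m
    · subst hi
      simp only [if_pos rfl, if_true]
      refine ⟨by linarith, by linarith, by linarith, by linarith, by linarith⟩
    · simp only [if_neg hi]
      exact ⟨g1, g2, g3, g4, g5⟩
  -- inequality (I) at w2 : θ ≥ w2 - wplus
  have A1 : 0 ≤ (c m * pstar w2 m + b m) * 0 + wplus * 1 - wminus * 0 - w2 * 1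
      + a * xstar w2 m * 1 + a * (∑ i : U, xstar w2 i) * 1 := by
    apply pert_ineq c b D pbar wplus wminus a w2 _ _ _ _ (hopt w2) m 0 1 0 1 1 one_pos
    intro ε hε1 hε2 i
    obtain ⟨g1, g2, g3, g4, g5⟩ := (hopt w2).1 i
    by_cases hi : i = m
    · subst hi
      simp only [if_pos rfl, if_true]
      refine ⟨by linarith, by linarith, by linarith, by linarith, by linarith⟩
    · simp only [if_neg hi]
      exact ⟨g1, g2, g3, g4, g5⟩
  rw [hx2, hS2] at A1
  -- Step D1 : pstar w1 m = pbar m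
  have hppbar : pstar w1 m = pbar m := by
    by_contra hne
    have hplt : pstar w1 m < pbar m :=
      lt_of_le_of_ne ((hopt w1).1 m).2.2.1 hne
    -- (III) at w2
    have A3 : 0 ≤ (c m * pstar w2 m + b m) * 1 + wplus * 0 - wminus * 0 - w2 * 1
        + a * xstar w2 m * 1 + a * (∑ i : U, xstar w2 i) * 1 := by
      apply pert_ineq c b D pbar wplus wminus a w2 _ _ _ _ (hopt w2) m 1 0 0 1
        (pbar m - pstar w2 m) (by rw [hp2]; linarith)
      intro ε hε1 hε2 i
      obtain ⟨g1, g2, g3, g4, g5⟩ := (hopt w2).1 i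
      by_cases hi : i = m
      · subst hi
        simp only [if_pos rfl, if_true]
        refine ⟨by linarith, by linarith, by linarith, by linarith, by linarith⟩
      · simp only [if_neg hi]
        exact ⟨g1, g2, g3, g4, g5⟩
    rw [hx2, hS2, hp2] at A3
    rcases eq_or_lt_of_le ((hopt w1).1 m).2.1 with hp0 | hp0
    · -- pstar w1 m = 0
      rw [← hp0] at A3
      have := hbw m
      linarith
    · -- (IV) at w1
      have A4 : 0 ≤ (c m * pstar w1 m + b m) * (-1) + wplus * 0 - wminus * 0 - w1 * (-1)
          + a * xstar w1 m * (-1) + a * (∑ i : U, xstar w1 i) * (-1) := by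
        apply pert_ineq c b D pbar wplus wminus a w1 _ _ _ _ (hopt w1) m (-1) 0 0 (-1)
          (pstar w1 m) hp0
        intro ε hε1 hε2 i
        obtain ⟨g1, g2, g3, g4, g5⟩ := (hopt w1).1 i
        by_cases hi : i = m
        · subst hi
          simp only [if_pos rfl, if_true]
          refine ⟨by linarith, by linarith, by linarith, by linarith, by linarith⟩
        · simp only [if_neg hi]
          exact ⟨g1, g2, g3, g4, g5⟩
      linarith
  -- Step D2 : xstar w1 m = pbar m - D m
  have hxval : xstar w1 m = pbar m - D m := by
    rcases lt_trichotomy (xstar w1 m) (pbar m - D m) with hd | hd | hd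
    · -- pmstar w2 m > 0, inequality (VI) at w2
      have hbal2 := ((hopt w2).1 m).1
      have hpm2 : 0 < pmstar w2 m := by
        have := ((hopt w2).1 m).2.2.2.1
        rw [hx2, hp2, hppbar] at hbal2
        linarith
      have A6 : 0 ≤ (c m * pstar w2 m + b m) * 0 + wplus * 0 - wminus * (-1) - w2 * 1
          + a * xstar w2 m * 1 + a * (∑ i : U, xstar w2 i) * 1 := by
        apply pert_ineq c b D pbar wplus wminus a w2 _ _ _ _ (hopt w2) m 0 0 (-1) 1
          (pmstar w2 m) hpm2
        intro ε hε1 hε2 i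
        obtain ⟨g1, g2, g3, g4, g5⟩ := (hopt w2).1 i
        by_cases hi : i = m
        · subst hi
          simp only [if_pos rfl, if_true]
          refine ⟨by linarith, by linarith, by linarith, by linarith, by linarith⟩
        · simp only [if_neg hi]
          exact ⟨g1, g2, g3, g4, g5⟩
      rw [hx2, hS2] at A6
      linarith
    · exact hd
    · -- ppstar w1 m > 0, inequality (V) at w1
      have hbal1 := ((hopt w1).1 m).1
      have hpp1 : 0 < ppstar w1 m := by
        have := ((hopt w1).1 m).2.2.2.2
        rw [hppbar] at hbal1
        linarith
      have A5 : 0 ≤ (c m * pstar w1 m + b m) * 0 + wplus * (-1) - wminus * 0 - w1 * (-1)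
          + a * xstar w1 m * (-1) + a * (∑ i : U, xstar w1 i) * (-1) := by
        apply pert_ineq c b D pbar wplus wminus a w1 _ _ _ _ (hopt w1) m 0 (-1) 0 (-1)
          (ppstar w1 m) hpp1
        intro ε hε1 hε2 i
        obtain ⟨g1, g2, g3, g4, g5⟩ := (hopt w1).1 i
        by_cases hi : i = m
        · subst hi
          simp only [if_pos rfl, if_true]
          refine ⟨by linarith, by linarith, by linarith, by linarith, by linarith⟩
        · simp only [if_neg hi]
          exact ⟨g1, g2, g3, g4, g5⟩
      linarith
  exact ⟨by rw [← samew.1 m, hxval], by rw [← samew.2 m, hppbar]⟩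
end

section
/- The best-response map P(X) is well defined: if two base prices produce the same aggregate uncleared sharing energy, they produce the same total power exchange; that is, for all w₁, w₂ ∈ ℝ, X(w₁) = X(w₂) implies P(w₁) = P(w₂). -/
/-!
The base price `w⁰` enters the objective only through the term `-w⁰ · Σ x`. Hence an optimal
solution at `w₂` whose aggregate `Σ x` equals that of an optimal solution at `w₁` is also optimal
at `w₁`. The objective is strictly convex in `p` (as `c > 0`, `a ≥ 0`), so all optimal solutions
at one price share the same `p`, and by power balance `P = Σ (p - D)`.
-/

open Finset

variable {U : Type*} [Fintype U]

noncomputable def prosumerCost (c b : U → ℝ) (wplus wminus a w : ℝ) (m : U) (p pp pm x : ℝ) : ℝ :=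
  c m / 2 * p ^ 2 + b m * p + wplus * pp - wminus * pm - w * x + a / 2 * x ^ 2

theorem objective_eq_sum_prosumerCost (c b : U → ℝ) (wplus wminus a w : ℝ)
    (p pp pm x : U → ℝ) :
    Objective c b wplus wminus a w p pp pm x =
      ∑ m, prosumerCost c b wplus wminus a w m (p m) (pp m) (pm m) (x m) +
        a / 2 * (∑ m, x m) ^ 2 := by
  simp only [Objective, prosumerCost, sum_add_distrib, mul_sum]

theorem objective_eq_add_mul_sum (c b : U → ℝ) (wplus wminus a w w' : ℝ)
    (p pp pm x : U → ℝ) :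
    Objective c b wplus wminus a w p pp pm x =
      Objective c b wplus wminus a w' p pp pm x + (w' - w) * ∑ m, x m := by
  simp only [objective_eq_sum_prosumerCost, mul_sum]
  rw [add_right_comm, ← sum_add_distrib]
  congr 1
  exact sum_congr rfl fun m _ => by unfold prosumerCost; ring

theorem objective_midpoint (c b : U → ℝ) (wplus wminus a w : ℝ)
    (p₁ pp₁ pm₁ x₁ p₂ pp₂ pm₂ x₂ : U → ℝ) :
    Objective c b wplus wminus a w (fun m => (p₁ m + p₂ m) / 2) (fun m => (pp₁ m + pp₂ m) / 2)
        (fun m => (pm₁ m + pm₂ m) / 2) (fun m => (x₁ m + x₂ m) / 2) =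
      (Objective c b wplus wminus a w p₁ pp₁ pm₁ x₁ +
          Objective c b wplus wminus a w p₂ pp₂ pm₂ x₂) / 2 -
        (∑ m, (c m / 8 * (p₁ m - p₂ m) ^ 2 + a / 8 * (x₁ m - x₂ m) ^ 2) +
          a / 8 * (∑ m, x₁ m - ∑ m, x₂ m) ^ 2) := by
  simp only [objective_eq_sum_prosumerCost]
  have hX : ∑ m, (x₁ m + x₂ m) / 2 = (∑ m, x₁ m + ∑ m, x₂ m) / 2 := by
    rw [← sum_add_distrib, sum_div]
  have hcost : ∑ m, prosumerCost c b wplus wminus a w m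
        ((p₁ m + p₂ m) / 2) ((pp₁ m + pp₂ m) / 2) ((pm₁ m + pm₂ m) / 2) ((x₁ m + x₂ m) / 2) =
      (∑ m, prosumerCost c b wplus wminus a w m (p₁ m) (pp₁ m) (pm₁ m) (x₁ m) +
          ∑ m, prosumerCost c b wplus wminus a w m (p₂ m) (pp₂ m) (pm₂ m) (x₂ m)) / 2 -
        ∑ m, (c m / 8 * (p₁ m - p₂ m) ^ 2 + a / 8 * (x₁ m - x₂ m) ^ 2) := by
    rw [← sum_add_distrib, sum_div, ← sum_sub_distrib]
    exact sum_congr rfl fun m _ => by unfold prosumerCost; ring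
  rw [hX, hcost]
  ring

omit [Fintype U] in
theorem Feasible.midpoint {D pbar p₁ pp₁ pm₁ x₁ p₂ pp₂ pm₂ x₂ : U → ℝ}
    (h₁ : Feasible D pbar p₁ pp₁ pm₁ x₁) (h₂ : Feasible D pbar p₂ pp₂ pm₂ x₂) :
    Feasible D pbar (fun m => (p₁ m + p₂ m) / 2) (fun m => (pp₁ m + pp₂ m) / 2)
      (fun m => (pm₁ m + pm₂ m) / 2) (fun m => (x₁ m + x₂ m) / 2) := fun m => by
  obtain ⟨hbal₁, hp₁, hpbar₁, hpp₁, hpm₁⟩ := h₁ m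
  obtain ⟨hbal₂, hp₂, hpbar₂, hpp₂, hpm₂⟩ := h₂ m
  refine ⟨?_, ?_, ?_, ?_, ?_⟩ <;> linarith

theorem Feasible.sum_exchange_eq {D pbar p pp pm x : U → ℝ} (h : Feasible D pbar p pp pm x) :
    ∑ m, (x m + pm m - pp m) = ∑ m, (p m - D m) :=
  sum_congr rfl fun m _ => by linarith [(h m).1]

theorem IsOptimal.of_sum_eq {c b D pbar : U → ℝ} {wplus wminus a w₁ w₂ : ℝ}
    {p₁ pp₁ pm₁ x₁ p₂ pp₂ pm₂ x₂ : U → ℝ}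
    (h₁ : IsOptimal c b D pbar wplus wminus a w₁ p₁ pp₁ pm₁ x₁)
    (h₂ : IsOptimal c b D pbar wplus wminus a w₂ p₂ pp₂ pm₂ x₂)
    (hX : ∑ m, x₁ m = ∑ m, x₂ m) :
    IsOptimal c b D pbar wplus wminus a w₁ p₂ pp₂ pm₂ x₂ := by
  refine ⟨h₂.1, fun q qp qm y hy => ?_⟩
  calc Objective c b wplus wminus a w₁ p₂ pp₂ pm₂ x₂
      = Objective c b wplus wminus a w₂ p₂ pp₂ pm₂ x₂ + (w₂ - w₁) * ∑ m, x₂ m :=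
        objective_eq_add_mul_sum ..
    _ ≤ Objective c b wplus wminus a w₂ p₁ pp₁ pm₁ x₁ + (w₂ - w₁) * ∑ m, x₁ m := by
        rw [hX]; gcongr; exact h₂.2 _ _ _ _ h₁.1
    _ = Objective c b wplus wminus a w₁ p₁ pp₁ pm₁ x₁ :=
        (objective_eq_add_mul_sum ..).symm
    _ ≤ Objective c b wplus wminus a w₁ q qp qm y := h₁.2 _ _ _ _ hy

theorem IsOptimal.p_eq {c b D pbar : U → ℝ} {wplus wminus a w : ℝ}
    {p₁ pp₁ pm₁ x₁ p₂ pp₂ pm₂ x₂ : U → ℝ} (hc : ∀ m, 0 < c m) (ha : 0 ≤ a)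
    (h₁ : IsOptimal c b D pbar wplus wminus a w p₁ pp₁ pm₁ x₁)
    (h₂ : IsOptimal c b D pbar wplus wminus a w p₂ pp₂ pm₂ x₂) :
    p₁ = p₂ := by
  have hnonneg : ∀ m ∈ (univ : Finset U),
      0 ≤ c m / 8 * (p₁ m - p₂ m) ^ 2 + a / 8 * (x₁ m - x₂ m) ^ 2 := fun m _ => by
    have := (hc m).le
    positivity
  have hgap : ∑ m, (c m / 8 * (p₁ m - p₂ m) ^ 2 + a / 8 * (x₁ m - x₂ m) ^ 2) ≤ 0 := by
    have hmid := h₁.2 _ _ _ _ (h₁.1.midpoint h₂.1)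
    have h₁₂ := h₁.2 _ _ _ _ h₂.1
    have h₂₁ := h₂.2 _ _ _ _ h₁.1
    have hX : 0 ≤ a / 8 * (∑ m, x₁ m - ∑ m, x₂ m) ^ 2 := by positivity
    rw [objective_midpoint] at hmid
    linarith
  have hzero := (sum_eq_zero_iff_of_nonneg hnonneg).1 (le_antisymm hgap (sum_nonneg hnonneg))
  funext m
  have hpx := (add_eq_zero_iff_of_nonneg (by have := (hc m).le; positivity) (by positivity)).1
    (hzero m (mem_univ m))
  simpa [(hc m).ne', sub_eq_zero] using hpx.1

theorem lesm_best_response_well_defined_general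
    (c b D pbar : U → ℝ) (wplus wminus a : ℝ)
    (hc : ∀ m, 0 < c m)
    (ha : 0 < a)
    (pstar ppstar pmstar xstar : ℝ → U → ℝ)
    (hopt : ∀ w0 : ℝ, IsOptimal c b D pbar wplus wminus a w0
      (pstar w0) (ppstar w0) (pmstar w0) (xstar w0)) :
    ∀ w1 w2 : ℝ,
      (∑ m : U, xstar w1 m) = (∑ m : U, xstar w2 m) →
      (∑ m : U, (xstar w1 m + pmstar w1 m - ppstar w1 m)) =
        (∑ m : U, (xstar w2 m + pmstar w2 m - ppstar w2 m)) := by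
  intro w1 w2 hX
  have hp : pstar w1 = pstar w2 := (hopt w1).p_eq hc ha.le ((hopt w1).of_sum_eq (hopt w2) hX)
  rw [(hopt w1).1.sum_exchange_eq, (hopt w2).1.sum_exchange_eq, hp]

/-- the best-response map `P(X)` is well defined: equal
aggregate uncleared energies imply equal total power exchanges. -/
theorem lesm_best_response_well_defined [Nonempty U]
    (c b D pbar : U → ℝ) (wplus wminus a : ℝ)
    (hc : ∀ m, 0 < c m) (hpbar : ∀ m, 0 ≤ pbar m)
    (hb : ∀ m, 0 < b m) (hbw : ∀ m, b m < wminus)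
    (hw : wminus < wplus) (ha : 0 < a)
    (pstar ppstar pmstar xstar : ℝ → U → ℝ)
    (hopt : ∀ w0 : ℝ, IsOptimal c b D pbar wplus wminus a w0
      (pstar w0) (ppstar w0) (pmstar w0) (xstar w0)) :
    ∀ w1 w2 : ℝ,
      (∑ m : U, xstar w1 m) = (∑ m : U, xstar w2 m) →
      (∑ m : U, (xstar w1 m + pmstar w1 m - ppstar w1 m)) =
        (∑ m : U, (xstar w2 m + pmstar w2 m - ppstar w2 m)) :=
  lesm_best_response_well_defined_general c b D pbar wplus wminus a hc ha pstar ppstar pmstar xstar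
    hopt
end
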